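/- Let n be an even positive integer, let r and s be integers with 2 ≤ r ≤ s ≤ 2r−1, and let m = s−r+1. Then each of the four quantities ν(n, P^{(r)}_s), ν(n, LP^{(r)}_s), τ(n, P^{(r)}_s), and τ(n, LP^{(r)}_s) equals 2·h(n,r,m) + h(n,r−1,m). -/

import Mathlib

open Finset
open scoped Classical

/-- Edge set of the natural tight path `P^{(r)}_s` on vertex set `[s] = {1,…,s}`:
all intervals of `r` consecutive integers. -/
def pathEdges (r s : ℕ) : Finset (Finset ℕ) :=
  (Finset.Icc 1 (s - r + 1)).image (fun i => Finset.Icc i (i + r - 1))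

/-- Edge set of the loose path `LP^{(r)}_s`: only the first and last edges. -/
def loosePathEdges (r s : ℕ) : Finset (Finset ℕ) :=
  {Finset.Icc 1 r, Finset.Icc (s - r + 1) s}

/-- `C` is the edge set of a copy in `K^{(r)}_n` of the ordered hypergraph with
vertex set `[s]` and edge set `E`, i.e. the image of `E` under a strictly
increasing map `[s] → [n]`. -/
def IsCopy (n s : ℕ) (E : Finset (Finset ℕ)) (C : Finset (Finset ℕ)) : Prop :=
  ∃ f : ℕ → ℕ, StrictMonoOn f ↑(Finset.Icc 1 s) ∧
    (∀ v ∈ Finset.Icc 1 s, f v ∈ Finset.Icc 1 n) ∧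
    C = E.image (fun e => e.image f)

/-- A transversal: a set `T` of `r`-element subsets of `[n]` meeting every copy. -/
def IsTransversal (n r s : ℕ) (E : Finset (Finset ℕ)) (T : Finset (Finset ℕ)) : Prop :=
  T ⊆ (Finset.Icc 1 n).powersetCard r ∧
  ∀ C : Finset (Finset ℕ), IsCopy n s E C → ∃ e ∈ C, e ∈ T

/-- The transversal number `τ(n,H)`. -/
noncomputable def tau (n r s : ℕ) (E : Finset (Finset ℕ)) : ℕ :=
  sInf {m | ∃ T : Finset (Finset ℕ), IsTransversal n r s E T ∧ T.card = m}

/-- A packing: an edge-disjoint family of copies. -/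
def IsPacking (n s : ℕ) (E : Finset (Finset ℕ)) (P : Finset (Finset (Finset ℕ))) : Prop :=
  (∀ C ∈ P, IsCopy n s E C) ∧
  ∀ C ∈ P, ∀ C' ∈ P, C ≠ C' → Disjoint C C'

/-- The packing number `ν(n,H)`. -/
noncomputable def nu (n s : ℕ) (E : Finset (Finset ℕ)) : ℕ :=
  sSup {m | ∃ P : Finset (Finset (Finset ℕ)), IsPacking n s E P ∧ P.card = m}

/-- The ordered Turán number: maximum number of edges of a subgraph of
`K^{(r)}_n` containing no copy of the hypergraph with edge set `E`. -/
noncomputable def exNum (n r s : ℕ) (E : Finset (Finset ℕ)) : ℕ :=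
  sSup {m | ∃ G ⊆ (Finset.Icc 1 n).powersetCard r,
    (∀ C : Finset (Finset ℕ), IsCopy n s E C → ¬ C ⊆ G) ∧ G.card = m}

/-- `S ⊆ [n]` is `m`-left-biased. -/
def LeftBiased (n m : ℕ) (S : Finset ℕ) : Prop :=
  ∃ u ≤ n / 2, (S ∩ Finset.Icc 1 u).card = m ∧ S ∩ Finset.Icc (n + 1 - u) n = ∅

/-- `h(n,t,m)`: the number of `m`-left-biased `t`-element subsets of `[n]`. -/
noncomputable def hcount (n t m : ℕ) : ℕ :=
  (((Finset.Icc 1 n).powersetCard t).filter (LeftBiased n m)).card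

/-- A fractional transversal. -/
def IsFracTransversal (n r s : ℕ) (E : Finset (Finset ℕ)) (w : Finset ℕ → ℝ) : Prop :=
  (∀ e ∈ (Finset.Icc 1 n).powersetCard r, 0 ≤ w e) ∧
  ∀ C : Finset (Finset ℕ), IsCopy n s E C → 1 ≤ ∑ e ∈ C, w e

/-- The fractional transversal number `τ*(n,H)`. -/
noncomputable def tauStar (n r s : ℕ) (E : Finset (Finset ℕ)) : ℝ :=
  sInf {x : ℝ | ∃ w : Finset ℕ → ℝ, IsFracTransversal n r s E w ∧
    x = ∑ e ∈ (Finset.Icc 1 n).powersetCard r, w e}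

/-- A `k`-edge-labeling of the ordered complete graph on `[n]`. -/
def IsLabeling (n k : ℕ) (φ : ℕ → ℕ → ℕ) : Prop :=
  ∀ u v : ℕ, u ∈ Finset.Icc 1 n → v ∈ Finset.Icc 1 n → u < v → φ u v ∈ Finset.Icc 1 k

/-- The number of good triples `u < v < w` in `[n]` (those with `φ(uv) < φ(vw)`). -/
def goodCount (n : ℕ) (φ : ℕ → ℕ → ℕ) : ℕ :=
  (((Finset.Icc 1 n) ×ˢ (Finset.Icc 1 n) ×ˢ (Finset.Icc 1 n)).filter
    (fun p => p.1 < p.2.1 ∧ p.2.1 < p.2.2 ∧ φ p.1 p.2.1 < φ p.2.1 p.2.2)).card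

/-- The number of bad triples `u < v < w` in `[n]` (those with `φ(uv) ≥ φ(vw)`). -/
def badCount (n : ℕ) (φ : ℕ → ℕ → ℕ) : ℕ :=
  (((Finset.Icc 1 n) ×ˢ (Finset.Icc 1 n) ×ˢ (Finset.Icc 1 n)).filter
    (fun p => p.1 < p.2.1 ∧ p.2.1 < p.2.2 ∧ ¬ φ p.1 p.2.1 < φ p.2.1 p.2.2)).card

/-- `f(n,k)`: the maximum number of good triples over all `k`-edge-labelings of `[n]`. -/
noncomputable def fmax (n k : ℕ) : ℕ :=
  sSup {m | ∃ φ : ℕ → ℕ → ℕ, IsLabeling n k φ ∧ goodCount n φ = m}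

/-- A labeling is monotone if `φ(uv) ≤ φ(vw)` whenever `u < v < w` in `[n]`. -/
def IsMonotone (n : ℕ) (φ : ℕ → ℕ → ℕ) : Prop :=
  ∀ u v w : ℕ, u ∈ Finset.Icc 1 n → v ∈ Finset.Icc 1 n → w ∈ Finset.Icc 1 n →
    u < v → v < w → φ u v ≤ φ v w

/-- `Φ_L(v) = max{φ(uv) : u < v}`, with `Φ_L(1) = 0`. -/
def PhiL (φ : ℕ → ℕ → ℕ) (v : ℕ) : ℕ := (Finset.Ico 1 v).sup (fun u => φ u v)

/-- `Φ_R(v) = min{φ(vw) : v < w ≤ n}`, with `Φ_R(n) = k+1`. -/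
noncomputable def PhiR (n k : ℕ) (φ : ℕ → ℕ → ℕ) (v : ℕ) : ℕ :=
  if v = n then k + 1 else sInf {m | ∃ w ∈ Finset.Ioc v n, φ v w = m}

/-- `X_i = {v ∈ [n] : Φ_L(v) = i}`. -/
def XL (n : ℕ) (φ : ℕ → ℕ → ℕ) (i : ℕ) : Finset ℕ :=
  (Finset.Icc 1 n).filter (fun v => PhiL φ v = i)

/-- `X̂_i = {v ∈ [n] : Φ_R(v) = i}`. -/
noncomputable def XR (n k : ℕ) (φ : ℕ → ℕ → ℕ) (i : ℕ) : Finset ℕ :=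
  (Finset.Icc 1 n).filter (fun v => PhiR n k φ v = i)

/-!
Write `m = s - r + 1` and call a set `(m, c)`-biased if its `m`-th smallest element `u`
satisfies `u + max ≤ c`; for `c = n` this is being `m`-left-biased.

Transversal: let `f(1) < ⋯ < f(s)` be a copy of the loose path. If `f(m) + f(r) ≤ n + 1`
its first edge is `(m, n+1)`-biased; otherwise the reflection `y ↦ n + 1 - y` of its last edge
is `m`-left-biased. So these two kinds of `r`-sets form a transversal.

Packing: for `H, B ⊆ [n]` with `#H = m - 1`, `#B = 2r - s`, `H < B` and `x + y ≤ n` on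
`H × B`, the tight path on `H`, then `B`, then a translate of `H` close to `n` is a copy; `B`
and then `H` can be read off from any single edge, so these copies are edge-disjoint.

Counting: `(H, B) ↦ H ∪ B` matches the pairs with `min B + max B ≤ n + 1` with the
`(m, n+1)`-biased `r`-sets, and reflecting `B` matches the other pairs with those having
`min B + max B ≤ n`, i.e. with the `m`-left-biased `r`-sets. Deleting the maximum turns the
`(m, n+1)`-biased sets that are not `m`-left-biased into the `m`-left-biased `(r-1)`-sets;
its inverse adds `n + 1 - u`, which differs from `u` because `n` is even. Hence packing and
transversal both have `2 h(n,r,m) + h(n,r-1,m)` elements, and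
`ν(P) ≤ ν(LP) ≤ τ(LP)`, `ν(P) ≤ τ(P) ≤ τ(LP)` close the argument.
-/

section Hypergraph

variable {n r s : ℕ} {E E' C : Finset (Finset ℕ)}

lemma IsCopy.subset_powersetCard (hE : E ⊆ (Icc 1 s).powersetCard r) (hC : IsCopy n s E C) :
    C ⊆ (Icc 1 n).powersetCard r := by
  obtain ⟨f, hf, hmaps, rfl⟩ := hC
  intro e he
  obtain ⟨e₀, he₀, rfl⟩ := mem_image.mp he
  obtain ⟨hsub, hcard⟩ := mem_powersetCard.mp (hE he₀)
  refine mem_powersetCard.mpr ⟨fun y hy => ?_, ?_⟩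
  · obtain ⟨v, hv, rfl⟩ := mem_image.mp hy
    exact hmaps v (hsub hv)
  · rw [card_image_of_injOn (hf.injOn.mono (by exact_mod_cast hsub)), hcard]

lemma IsCopy.nonempty (hE : E.Nonempty) (hC : IsCopy n s E C) : C.Nonempty := by
  obtain ⟨f, -, -, rfl⟩ := hC
  exact hE.image _

lemma IsCopy.exists_subset (hE : E' ⊆ E) (hC : IsCopy n s E C) :
    ∃ C' ⊆ C, IsCopy n s E' C' := by
  obtain ⟨f, hf, hmaps, rfl⟩ := hC
  exact ⟨E'.image fun e => e.image f, image_subset_image hE, f, hf, hmaps, rfl⟩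

lemma IsPacking.card_le {P : Finset (Finset (Finset ℕ))} {T : Finset (Finset ℕ)}
    (hP : IsPacking n s E P) (hT : ∀ C, IsCopy n s E C → ∃ e ∈ C, e ∈ T) : #P ≤ #T := by
  choose! g hgC hgT using fun C (hC : C ∈ P) => hT C (hP.1 C hC)
  refine card_le_card_of_injOn g hgT fun C hC C' hC' hgg => ?_
  by_contra hne
  exact disjoint_left.mp (hP.2 C hC C' hC' hne) (hgC C hC) (hgg ▸ hgC C' hC')

lemma isTransversal_powersetCard (hE : E ⊆ (Icc 1 s).powersetCard r) (hne : E.Nonempty) :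
    IsTransversal n r s E ((Icc 1 n).powersetCard r) := by
  refine ⟨Subset.rfl, fun C hC => ?_⟩
  obtain ⟨e, he⟩ := hC.nonempty hne
  exact ⟨e, he, hC.subset_powersetCard hE he⟩

lemma tau_le_card {T : Finset (Finset ℕ)} (hT : IsTransversal n r s E T) : tau n r s E ≤ #T :=
  Nat.sInf_le ⟨T, hT, rfl⟩

lemma exists_isTransversal_card_eq_tau (hE : E ⊆ (Icc 1 s).powersetCard r) (hne : E.Nonempty) :
    ∃ T, IsTransversal n r s E T ∧ #T = tau n r s E :=
  Nat.sInf_mem (s := {k | ∃ T, IsTransversal n r s E T ∧ #T = k})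
    ⟨_, _, isTransversal_powersetCard hE hne, rfl⟩

lemma isPacking_empty : IsPacking n s E ∅ := by
  simp [IsPacking]

lemma nu_le_of_forall_isPacking {k : ℕ}
    (h : ∀ P, IsPacking n s E P → #P ≤ k) : nu n s E ≤ k :=
  csSup_le ⟨0, ∅, isPacking_empty, card_empty⟩ fun _ ⟨P, hP, hk⟩ => hk ▸ h P hP

lemma card_le_nu (hE : E ⊆ (Icc 1 s).powersetCard r) (hne : E.Nonempty)
    {P : Finset (Finset (Finset ℕ))} (hP : IsPacking n s E P) : #P ≤ nu n s E := by
  refine le_csSup ⟨#((Icc 1 n).powersetCard r), ?_⟩ ⟨P, hP, rfl⟩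
  rintro _ ⟨Q, hQ, rfl⟩
  exact hQ.card_le (isTransversal_powersetCard hE hne).2

lemma nu_le_tau (hE : E ⊆ (Icc 1 s).powersetCard r) (hne : E.Nonempty) :
    nu n s E ≤ tau n r s E := by
  obtain ⟨T, hT, hcard⟩ := exists_isTransversal_card_eq_tau hE hne
  exact nu_le_of_forall_isPacking fun P hP => hcard ▸ hP.card_le hT.2

lemma tau_le_tau_of_subset (hEE' : E' ⊆ E) (hE' : E' ⊆ (Icc 1 s).powersetCard r)
    (hne : E'.Nonempty) : tau n r s E ≤ tau n r s E' := by
  obtain ⟨T, hT, hcard⟩ := exists_isTransversal_card_eq_tau hE' hne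
  refine hcard ▸ tau_le_card ⟨hT.1, fun C hC => ?_⟩
  obtain ⟨C', hC'C, hC'⟩ := hC.exists_subset hEE'
  obtain ⟨e, he, heT⟩ := hT.2 C' hC'
  exact ⟨e, hC'C he, heT⟩

lemma nu_le_nu_of_subset (hEE' : E' ⊆ E) (hE' : E' ⊆ (Icc 1 s).powersetCard r)
    (hne : E'.Nonempty) : nu n s E ≤ nu n s E' := by
  refine nu_le_of_forall_isPacking fun P hP => ?_
  choose! g hgC hg using fun C (hC : C ∈ P) => (hP.1 C hC).exists_subset hEE'
  have hinj : Set.InjOn g P := fun C hC C' hC' hgg => by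
    by_contra hne'
    obtain ⟨e, he⟩ := (hg C hC).nonempty hne
    exact disjoint_left.mp (hP.2 C hC C' hC' hne') (hgC C hC he) (hgC C' hC' (hgg ▸ he))
  refine card_image_of_injOn hinj ▸ card_le_nu hE' hne ⟨?_, ?_⟩
  · simp only [mem_image, forall_exists_index, and_imp]
    rintro _ C hC rfl
    exact hg C hC
  · simp only [mem_image]
    rintro _ ⟨C, hC, rfl⟩ _ ⟨C', hC', rfl⟩ hne'
    exact (hP.2 C hC C' hC' fun h => hne' (h ▸ rfl)).mono (hgC C hC) (hgC C' hC')

end Hypergraph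

lemma pathEdges_subset_powersetCard {r s : ℕ} (hrs : r ≤ s) :
    pathEdges r s ⊆ (Icc 1 s).powersetCard r := by
  intro e he
  obtain ⟨i, hi, rfl⟩ := mem_image.mp he
  rw [mem_Icc] at hi
  refine mem_powersetCard.mpr ⟨fun x hx => ?_, ?_⟩
  · rw [mem_Icc] at hx ⊢
    omega
  · rw [Nat.card_Icc]
    omega

lemma pathEdges_nonempty (r s : ℕ) : (pathEdges r s).Nonempty :=
  (nonempty_Icc.mpr (by omega)).image _

lemma loosePathEdges_subset_pathEdges {r s : ℕ} (hrs : r ≤ s) :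
    loosePathEdges r s ⊆ pathEdges r s := by
  intro e he
  simp only [loosePathEdges, mem_insert, mem_singleton] at he
  simp only [pathEdges, mem_image, mem_Icc]
  rcases he with rfl | rfl
  · exact ⟨1, by omega, by congr 1; omega⟩
  · exact ⟨s - r + 1, by omega, by congr 1; omega⟩

/-- The `j`-th smallest element of `X`, counting from `j = 1`. -/
noncomputable def nthSmallest (X : Finset ℕ) (j : ℕ) : ℕ :=
  if h : j - 1 < #X then X.orderEmbOfFin rfl ⟨j - 1, h⟩ else 0

section NthSmallest

variable (X : Finset ℕ) {i j : ℕ}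

lemma nthSmallest_mem (hj : j ∈ Icc 1 #X) : nthSmallest X j ∈ X := by
  have h : j - 1 < #X := by rw [mem_Icc] at hj; omega
  rw [nthSmallest, dif_pos h]
  exact X.orderEmbOfFin_mem rfl _

lemma nthSmallest_strictMonoOn : StrictMonoOn (nthSmallest X) (Icc 1 #X) := by
  intro i hi j hj hij
  simp only [coe_Icc, Set.mem_Icc] at hi hj
  have hi' : i - 1 < #X := by omega
  have hj' : j - 1 < #X := by omega
  rw [nthSmallest, nthSmallest, dif_pos hi', dif_pos hj']
  exact (X.orderEmbOfFin rfl).strictMono (Fin.mk_lt_mk.mpr (by omega))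

lemma nthSmallest_lt_nthSmallest (hi : i ∈ Icc 1 #X) (hj : j ∈ Icc 1 #X) (hij : i < j) :
    nthSmallest X i < nthSmallest X j :=
  nthSmallest_strictMonoOn X (by exact_mod_cast hi) (by exact_mod_cast hj) hij

lemma image_nthSmallest : (Icc 1 #X).image (nthSmallest X) = X := by
  refine eq_of_subset_of_card_le (fun y hy => ?_) ?_
  · obtain ⟨j, hj, rfl⟩ := mem_image.mp hy
    exact nthSmallest_mem X hj
  · rw [card_image_of_injOn (nthSmallest_strictMonoOn X).injOn, Nat.card_Icc]
    omega

lemma exists_nthSmallest_eq {x : ℕ} (hx : x ∈ X) : ∃ j ∈ Icc 1 #X, nthSmallest X j = x :=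
  mem_image.mp ((image_nthSmallest X).symm ▸ hx)

end NthSmallest

def reflect (n : ℕ) (S : Finset ℕ) : Finset ℕ := S.image (n + 1 - ·)

section Reflect

variable {n : ℕ} {S : Finset ℕ}

lemma mem_reflect {y : ℕ} : y ∈ reflect n S ↔ ∃ x ∈ S, n + 1 - x = y := mem_image

lemma reflect_subset_Icc (hS : S ⊆ Icc 1 n) : reflect n S ⊆ Icc 1 n := by
  intro y hy
  obtain ⟨x, hx, rfl⟩ := mem_reflect.mp hy
  have := mem_Icc.mp (hS hx)
  rw [mem_Icc]
  omega

lemma card_reflect (hS : S ⊆ Icc 1 n) : #(reflect n S) = #S := by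
  refine card_image_of_injOn fun x hx y hy hxy => ?_
  have := mem_Icc.mp (hS hx)
  have := mem_Icc.mp (hS hy)
  omega

lemma reflect_reflect (hS : S ⊆ Icc 1 n) : reflect n (reflect n S) = S := by
  rw [reflect, reflect, image_image]
  refine (image_congr fun x hx => ?_).trans image_id
  have := mem_Icc.mp (hS hx)
  simp only [Function.comp_apply, id]
  omega

lemma reflect_mem_powersetCard {t : ℕ} (hS : S ∈ (Icc 1 n).powersetCard t) :
    reflect n S ∈ (Icc 1 n).powersetCard t := by
  rw [mem_powersetCard] at hS ⊢
  exact ⟨reflect_subset_Icc hS.1, (card_reflect hS.1).trans hS.2⟩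

lemma card_filter_reflect (t : ℕ) (P : Finset ℕ → Prop) :
    #(((Icc 1 n).powersetCard t).filter fun e => P (reflect n e)) =
      #(((Icc 1 n).powersetCard t).filter P) := by
  have hinv : ∀ e ∈ (Icc 1 n).powersetCard t, reflect n (reflect n e) = e :=
    fun e he => reflect_reflect (mem_powersetCard.mp he).1
  refine card_nbij' (reflect n) (reflect n) (fun e he => ?_) (fun e he => ?_)
    (fun e he => hinv e (mem_filter.mp he).1) (fun e he => hinv e (mem_filter.mp he).1)
  all_goals
    rw [mem_coe, mem_filter] at he ⊢
    refine ⟨reflect_mem_powersetCard he.1, ?_⟩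
  · exact he.2
  · rw [hinv e he.1]
    exact he.2

lemma min'_reflect (h : S.Nonempty) (h' : (reflect n S).Nonempty) :
    (reflect n S).min' h' = n + 1 - S.max' h := by
  refine le_antisymm ((reflect n S).min'_le _ (mem_image_of_mem _ (S.max'_mem h))) ?_
  refine le_min' _ _ _ fun y hy => ?_
  obtain ⟨x, hx, rfl⟩ := mem_reflect.mp hy
  have := S.le_max' x hx
  omega

lemma max'_reflect (h : S.Nonempty) (h' : (reflect n S).Nonempty) :
    (reflect n S).max' h' = n + 1 - S.min' h := by
  refine le_antisymm ?_ ((reflect n S).le_max' _ (mem_image_of_mem _ (S.min'_mem h)))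
  refine max'_le _ _ _ fun y hy => ?_
  obtain ⟨x, hx, rfl⟩ := mem_reflect.mp hy
  have := S.min'_le x hx
  omega

end Reflect

/-- The `m`-th smallest element `u` of `S` satisfies `u + max S ≤ c`. -/
def Biased (c m : ℕ) (S : Finset ℕ) : Prop :=
  ∃ u ∈ S, #(S ∩ Icc 1 u) = m ∧ ∀ y ∈ S, u + y ≤ c

section Biased

variable {n c m : ℕ} {S : Finset ℕ}

lemma card_inter_Icc_lt_card_inter_Icc {u v : ℕ} (hv : v ∈ S) (hv1 : 1 ≤ v) (huv : u < v) :
    #(S ∩ Icc 1 u) < #(S ∩ Icc 1 v) := by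
  refine card_lt_card ⟨fun y hy => ?_, fun h => ?_⟩
  · simp only [mem_inter, mem_Icc] at hy ⊢
    exact ⟨hy.1, hy.2.1, by omega⟩
  · have := mem_Icc.mp (mem_inter.mp (h (mem_inter.mpr ⟨hv, mem_Icc.mpr ⟨hv1, le_rfl⟩⟩))).2
    omega

lemma eq_of_card_inter_Icc_eq {u v : ℕ} (hu : u ∈ S) (hv : v ∈ S) (hu1 : 1 ≤ u)
    (hv1 : 1 ≤ v) (h : #(S ∩ Icc 1 u) = #(S ∩ Icc 1 v)) : u = v := by
  rcases lt_trichotomy u v with huv | rfl | hvu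
  · exact absurd h (card_inter_Icc_lt_card_inter_Icc hv hv1 huv).ne
  · rfl
  · exact absurd h (card_inter_Icc_lt_card_inter_Icc hu hu1 hvu).ne'

lemma Biased.mono {c' : ℕ} (hcc' : c ≤ c') (h : Biased c m S) : Biased c' m S := by
  obtain ⟨u, hu, hcard, hle⟩ := h
  exact ⟨u, hu, hcard, fun y hy => (hle y hy).trans hcc'⟩

lemma leftBiased_iff_biased (hm : 1 ≤ m) (hS : S ⊆ Icc 1 n) :
    LeftBiased n m S ↔ Biased n m S := by
  constructor
  · rintro ⟨u, -, hcard, hempty⟩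
    have hne : (S ∩ Icc 1 u).Nonempty := card_pos.mp (by omega)
    set v := (S ∩ Icc 1 u).max' hne
    have hv := mem_inter.mp ((S ∩ Icc 1 u).max'_mem hne)
    have hvu := (mem_Icc.mp hv.2).2
    refine ⟨v, hv.1, ?_, fun y hy => ?_⟩
    · rw [← hcard]
      congr 1
      ext y
      simp only [mem_inter, mem_Icc]
      refine ⟨fun h => ⟨h.1, h.2.1, h.2.2.trans hvu⟩, fun h => ⟨h.1, h.2.1, ?_⟩⟩
      exact (S ∩ Icc 1 u).le_max' y (mem_inter.mpr ⟨h.1, mem_Icc.mpr h.2⟩)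
    · have hyn := (mem_Icc.mp (hS hy)).2
      have : y ∉ Icc (n + 1 - u) n := fun h =>
        notMem_empty y (hempty ▸ mem_inter.mpr ⟨hy, h⟩)
      rw [mem_Icc] at this
      omega
  · rintro ⟨u, hu, hcard, hle⟩
    have := hle u hu
    refine ⟨u, by omega, hcard, eq_empty_of_forall_notMem fun y hy => ?_⟩
    rw [mem_inter, mem_Icc] at hy
    have := hle y hy.1
    omega

lemma hcount_eq_card_filter_biased (hm : 1 ≤ m) (t : ℕ) :
    hcount n t m = #(((Icc 1 n).powersetCard t).filter (Biased n m)) := by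
  rw [hcount, filter_congr fun e he => leftBiased_iff_biased hm (mem_powersetCard.mp he).1]

lemma not_biased_reflect (hS : S ⊆ Icc 1 n) (h : Biased (n + 1) m S) :
    ¬ Biased n m (reflect n S) := by
  rintro ⟨u', hu', -, hle'⟩
  obtain ⟨u, hu, -, hle⟩ := h
  obtain ⟨x, hx, rfl⟩ := mem_reflect.mp hu'
  have h₁ := hle x hx
  have h₂ := hle' (n + 1 - u) (mem_image_of_mem _ hu)
  have := mem_Icc.mp (hS hu)
  have := mem_Icc.mp (hS hx)
  omega

end Biased

section Transversal

variable {f : ℕ → ℕ} {c m r : ℕ}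

lemma image_Icc_inter_Icc (hf : StrictMonoOn f (Icc 1 r)) (hf1 : ∀ v ∈ Icc 1 r, 1 ≤ f v)
    {t : ℕ} (ht : t ∈ Icc 1 r) : (Icc 1 r).image f ∩ Icc 1 (f t) = (Icc 1 t).image f := by
  ext y
  simp only [mem_inter, mem_image, mem_Icc]
  constructor
  · rintro ⟨⟨v, hv, rfl⟩, -, hvt⟩
    have hv' : v ∈ (Icc 1 r : Set ℕ) := by simpa using hv
    exact ⟨v, ⟨hv.1, (hf.le_iff_le hv' (by simpa using ht)).mp hvt⟩, rfl⟩
  · rintro ⟨v, hv, rfl⟩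
    have hv' : v ∈ Icc 1 r := mem_Icc.mpr ⟨hv.1, hv.2.trans (mem_Icc.mp ht).2⟩
    refine ⟨⟨v, mem_Icc.mp hv', rfl⟩, hf1 v hv', ?_⟩
    exact (hf.le_iff_le (by simpa using hv') (by simpa using ht)).mpr hv.2

lemma biased_image_Icc (hf : StrictMonoOn f (Icc 1 r)) (hf1 : ∀ v ∈ Icc 1 r, 1 ≤ f v)
    (hm : m ∈ Icc 1 r) (h : f m + f r ≤ c) : Biased c m ((Icc 1 r).image f) := by
  have hr : r ∈ Icc 1 r := mem_Icc.mpr ⟨(mem_Icc.mp hm).1.trans (mem_Icc.mp hm).2, le_rfl⟩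
  refine ⟨f m, mem_image_of_mem _ hm, ?_, ?_⟩
  · rw [image_Icc_inter_Icc hf hf1 hm, card_image_of_injOn, Nat.card_Icc]
    · omega
    · exact hf.injOn.mono (coe_subset.mpr (Icc_subset_Icc le_rfl (mem_Icc.mp hm).2))
  · intro y hy
    obtain ⟨v, hv, rfl⟩ := mem_image.mp hy
    have := (hf.le_iff_le (by simpa using hv) (by simpa using hr)).mpr (mem_Icc.mp hv).2
    omega

lemma reflect_image_Icc (n : ℕ) (f : ℕ → ℕ) (m s : ℕ) :
    reflect n ((Icc m s).image f) = (Icc 1 (s + 1 - m)).image fun v => n + 1 - f (s + 1 - v) := by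
  rw [reflect, image_image]
  ext y
  simp only [mem_image, mem_Icc, Function.comp_apply]
  constructor
  · rintro ⟨w, hw, rfl⟩
    exact ⟨s + 1 - w, by omega, by rw [show s + 1 - (s + 1 - w) = w by omega]⟩
  · rintro ⟨v, hv, rfl⟩
    exact ⟨s + 1 - v, by omega, rfl⟩

lemma strictMonoOn_reflect_comp {n s : ℕ} {f : ℕ → ℕ} (hf : StrictMonoOn f (Icc 1 s))
    (hfn : ∀ v ∈ Icc 1 s, f v ≤ n) :
    StrictMonoOn (fun v => n + 1 - f (s + 1 - v)) (Icc 1 s) := by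
  intro v hv w hw hvw
  simp only [coe_Icc, Set.mem_Icc] at hv hw
  have := hf (a := s + 1 - w) (b := s + 1 - v) (by simp; omega) (by simp; omega) (by omega)
  have := hfn (s + 1 - v) (mem_Icc.mpr ⟨by omega, by omega⟩)
  simp only
  omega

end Transversal

noncomputable def transversalSet (n r m : ℕ) : Finset (Finset ℕ) :=
  ((Icc 1 n).powersetCard r).filter fun e => Biased (n + 1) m e ∨ Biased n m (reflect n e)

lemma isTransversal_transversalSet {n r s : ℕ} (hrs : r ≤ s) (hs : s < 2 * r) :
    IsTransversal n r s (loosePathEdges r s) (transversalSet n r (s - r + 1)) := by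
  refine ⟨filter_subset _ _, fun C hC => ?_⟩
  have hCr := hC.subset_powersetCard
    ((loosePathEdges_subset_pathEdges hrs).trans (pathEdges_subset_powersetCard hrs))
  obtain ⟨f, hf, hmaps, rfl⟩ := hC
  rw [loosePathEdges] at hCr ⊢
  set m := s - r + 1 with hm_def
  clear_value m
  have hrs' : (Icc 1 r : Set ℕ) ⊆ Icc 1 s := by
    rw [coe_Icc, coe_Icc]
    exact Set.Icc_subset_Icc le_rfl hrs
  have hfn : ∀ v ∈ Icc 1 s, 1 ≤ f v ∧ f v ≤ n := fun v hv => mem_Icc.mp (hmaps v hv)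
  have hm : m ∈ Icc 1 r := mem_Icc.mpr ⟨by omega, by omega⟩
  rcases le_or_gt (f m + f r) (n + 1) with h | h
  · have he := mem_image_of_mem (fun e => e.image f) (mem_insert_self (Icc 1 r) {Icc m s})
    refine ⟨_, he, mem_filter.mpr ⟨hCr he, Or.inl ?_⟩⟩
    exact biased_image_Icc (hf.mono hrs') (fun v hv => (hfn v (hrs' hv)).1) hm h
  · have he := mem_image_of_mem (fun e => e.image f)
      (by simp : Icc m s ∈ ({Icc 1 r, Icc m s} : Finset (Finset ℕ)))
    refine ⟨_, he, mem_filter.mpr ⟨hCr he, Or.inr ?_⟩⟩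
    -- the reflected last edge is the first edge of the reversed copy
    rw [reflect_image_Icc, show s + 1 - m = r by omega]
    have hg := (strictMonoOn_reflect_comp hf fun v hv => (hfn v hv).2).mono hrs'
    refine biased_image_Icc hg (fun v hv => ?_) hm ?_
    · have := (hfn (s + 1 - v) (mem_Icc.mpr (by rw [mem_Icc] at hv; omega))).2
      omega
    · rw [show s + 1 - m = r by omega, show s + 1 - r = m by omega]
      have := hfn m (mem_Icc.mpr ⟨by omega, by omega⟩)
      omega

lemma card_transversalSet {n r m : ℕ} :
    #(transversalSet n r m) =
      #(((Icc 1 n).powersetCard r).filter (Biased (n + 1) m)) +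
      #(((Icc 1 n).powersetCard r).filter (Biased n m)) := by
  rw [transversalSet, filter_or, card_union_of_disjoint, card_filter_reflect]
  refine disjoint_filter.mpr fun e he h => ?_
  exact not_biased_reflect (mem_powersetCard.mp he).1 h

section Middle

variable {n m : ℕ}

lemma erase_inter_Icc {S : Finset ℕ} {u w : ℕ} (huw : u < w) :
    S.erase w ∩ Icc 1 u = S ∩ Icc 1 u := by
  rw [erase_inter, erase_eq_of_notMem]
  simp only [mem_inter, mem_Icc]
  omega

lemma exists_pivot_of_biased_succ_not_biased (hn : Even n) {S : Finset ℕ} (hS : S ⊆ Icc 1 n)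
    (h : Biased (n + 1) m S) (h' : ¬ Biased n m S) :
    ∃ u ∈ S, #(S ∩ Icc 1 u) = m ∧ u < n + 1 - u ∧ n + 1 - u ∈ S ∧
      S.sup id = n + 1 - u ∧ ∀ y ∈ S, y ≠ n + 1 - u → u + y ≤ n := by
  obtain ⟨u, hu, hcard, hle⟩ := h
  obtain ⟨w, hw, hw'⟩ : ∃ w ∈ S, n < u + w := by
    by_contra! hlt
    exact h' ⟨u, hu, hcard, hlt⟩
  have hw_eq : w = n + 1 - u := by
    have := hle w hw
    omega
  subst hw_eq
  have hsup : S.sup id = n + 1 - u :=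
    le_antisymm (Finset.sup_le fun y hy => by have := hle y hy; simp only [id]; omega)
      (le_sup (f := id) hw)
  refine ⟨u, hu, hcard, ?_, hw, hsup, fun y hy hyw => ?_⟩
  · obtain ⟨k, rfl⟩ := hn
    have := hle u hu
    omega
  · have := hle y hy
    omega

lemma exists_insert_of_biased {S : Finset ℕ} (hS : S ⊆ Icc 1 n) (h : Biased n m S) :
    ∃ w ∉ S, insert w S ⊆ Icc 1 n ∧ (insert w S).sup id = w ∧
      Biased (n + 1) m (insert w S) ∧ ¬ Biased n m (insert w S) := by
  obtain ⟨u, hu, hcard, hle⟩ := h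
  have hu1 := (mem_Icc.mp (hS hu)).1
  have huu := hle u hu
  have hw : n + 1 - u ∉ S := fun hw => by have := hle _ hw; omega
  have hlt : u < n + 1 - u := by omega
  have hS' : insert (n + 1 - u) S ⊆ Icc 1 n :=
    insert_subset (mem_Icc.mpr ⟨by omega, by omega⟩) hS
  have hcard' : #(insert (n + 1 - u) S ∩ Icc 1 u) = m := by
    rw [← erase_inter_Icc hlt, erase_insert hw, hcard]
  refine ⟨n + 1 - u, hw, hS', ?_, ⟨u, mem_insert_of_mem hu, hcard', fun y hy => ?_⟩, ?_⟩
  · refine le_antisymm (Finset.sup_le fun y hy => ?_) (le_sup (f := id) (mem_insert_self _ _))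
    rcases mem_insert.mp hy with rfl | hy
    · rfl
    · have := hle y hy
      simp only [id]
      omega
  · rcases mem_insert.mp hy with rfl | hy
    · omega
    · have := hle y hy
      omega
  · rintro ⟨v, hv, hv_card, hvle⟩
    have hvu : v = u := eq_of_card_inter_Icc_eq hv (mem_insert_of_mem hu)
      (mem_Icc.mp (hS' hv)).1 hu1 (hv_card.trans hcard'.symm)
    have := hvle _ (mem_insert_self _ _)
    omega

lemma card_filter_biased_succ_and_not_biased (hn : Even n) (r : ℕ) :
    #(((Icc 1 n).powersetCard r).filter fun e => Biased (n + 1) m e ∧ ¬ Biased n m e) =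
      #(((Icc 1 n).powersetCard (r - 1)).filter (Biased n m)) := by
  refine card_bij (fun e _ => e.erase (e.sup id)) (fun e he => ?_) (fun e he e' he' hee' => ?_)
    (fun e' he' => ?_)
  · simp only [mem_filter, mem_powersetCard] at he ⊢
    obtain ⟨⟨hS, hcard⟩, h, h'⟩ := he
    obtain ⟨u, hu, hu_card, hlt, hw, hsup, hle⟩ :=
      exists_pivot_of_biased_succ_not_biased hn hS h h'
    rw [hsup]
    refine ⟨⟨(erase_subset _ _).trans hS, by rw [card_erase_of_mem hw, hcard]⟩, u,
      mem_erase.mpr ⟨hlt.ne, hu⟩, by rwa [erase_inter_Icc hlt], fun y hy => ?_⟩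
    exact hle y (mem_erase.mp hy).2 (mem_erase.mp hy).1
  · simp only [mem_filter, mem_powersetCard] at he he'
    obtain ⟨u, hu, hu_card, hlt, hw, hsup, -⟩ :=
      exists_pivot_of_biased_succ_not_biased hn he.1.1 he.2.1 he.2.2
    obtain ⟨u', hu', hu'_card, hlt', hw', hsup', -⟩ :=
      exists_pivot_of_biased_succ_not_biased hn he'.1.1 he'.2.1 he'.2.2
    rw [hsup, hsup'] at hee'
    have huu' : u = u' := by
      have hu_mem : u ∈ e.erase (n + 1 - u) := mem_erase.mpr ⟨hlt.ne, hu⟩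
      have hu'_mem : u' ∈ e.erase (n + 1 - u) := hee' ▸ mem_erase.mpr ⟨hlt'.ne, hu'⟩
      refine eq_of_card_inter_Icc_eq hu_mem hu'_mem (mem_Icc.mp (he.1.1 hu)).1
        (mem_Icc.mp (he'.1.1 hu')).1 ?_
      rw [erase_inter_Icc hlt, hu_card, hee', erase_inter_Icc hlt', hu'_card]
    subst huu'
    rw [← insert_erase hw, hee', insert_erase hw']
  · simp only [mem_filter, mem_powersetCard] at he' ⊢
    obtain ⟨w, hw, hS', hsup, h, h'⟩ := exists_insert_of_biased he'.1.1 he'.2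
    refine ⟨insert w e', ⟨⟨hS', ?_⟩, h, h'⟩, by rw [hsup, erase_insert hw]⟩
    obtain ⟨u, hu, -⟩ := he'.2
    have := card_pos.mpr ⟨u, hu⟩
    rw [card_insert_of_notMem hw, he'.1.2]
    omega

lemma card_filter_biased_succ (hn : Even n) (hm : 1 ≤ m) (r : ℕ) :
    #(((Icc 1 n).powersetCard r).filter (Biased (n + 1) m)) =
      hcount n r m + hcount n (r - 1) m := by
  rw [hcount_eq_card_filter_biased hm, hcount_eq_card_filter_biased hm,
    ← card_filter_biased_succ_and_not_biased hn r,
    ← card_filter_add_card_filter_not (p := Biased n m), filter_filter, filter_filter]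
  congr 2
  exact filter_congr fun e _ => ⟨And.right, fun h => ⟨h.mono n.le_succ, h⟩⟩

end Middle

structure PackingSeed (n a b : ℕ) (H B : Finset ℕ) : Prop where
  card_head : #H = a
  card_body : #B = b
  nonempty_body : B.Nonempty
  head_subset : H ⊆ Icc 1 n
  body_subset : B ⊆ Icc 1 n
  lt_and_add_le : ∀ x ∈ H, ∀ y ∈ B, x < y ∧ x + y ≤ n

/-- The copy built from a seed `(H, B)` has `H` in `[1, g]`, `B` in `[g+1, n-g]` and the translate
of `H` in `[n-g+1, n]`, where `g = gap n B`; these zones let an edge determine the seed. -/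
noncomputable def gap (n : ℕ) (B : Finset ℕ) : ℕ :=
  if h : B.Nonempty then min (B.min' h - 1) (n - B.max' h) else 0

noncomputable def seedMap (n a b : ℕ) (H B : Finset ℕ) (t : ℕ) : ℕ :=
  if t ≤ a then nthSmallest H t
  else if t ≤ a + b then nthSmallest B (t - a)
  else nthSmallest H (t - (a + b)) + (n - gap n B)

noncomputable def seedEdge (n a b : ℕ) (H B : Finset ℕ) (i : ℕ) : Finset ℕ :=
  (Icc i (i + (a + b) - 1)).image (seedMap n a b H B)

noncomputable def seedCopy (n a b : ℕ) (H B : Finset ℕ) : Finset (Finset ℕ) :=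
  (Icc 1 (a + 1)).image (seedEdge n a b H B)

section SeedMap

variable {n a b t : ℕ} {H B : Finset ℕ}

lemma seedMap_of_le (ht : t ≤ a) : seedMap n a b H B t = nthSmallest H t := by
  rw [seedMap, if_pos ht]

lemma seedMap_of_lt_of_le (h₁ : a < t) (h₂ : t ≤ a + b) :
    seedMap n a b H B t = nthSmallest B (t - a) := by
  rw [seedMap, if_neg h₁.not_ge, if_pos h₂]

lemma seedMap_of_lt (h : a + b < t) :
    seedMap n a b H B t = nthSmallest H (t - (a + b)) + (n - gap n B) := by
  rw [seedMap, if_neg (by omega), if_neg h.not_ge]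

end SeedMap

namespace PackingSeed

variable {n a b : ℕ} {H B : Finset ℕ}

lemma gap_eq (gp : PackingSeed n a b H B) :
    gap n B = min (B.min' gp.nonempty_body - 1) (n - B.max' gp.nonempty_body) := by
  rw [gap, dif_pos gp.nonempty_body]

lemma one_le_of_mem_head (gp : PackingSeed n a b H B) {x : ℕ} (hx : x ∈ H) : 1 ≤ x :=
  (mem_Icc.mp (gp.head_subset hx)).1

lemma le_gap (gp : PackingSeed n a b H B) {x : ℕ} (hx : x ∈ H) : x ≤ gap n B := by
  have h₁ := (gp.lt_and_add_le x hx _ (B.min'_mem gp.nonempty_body)).1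
  have h₂ := (gp.lt_and_add_le x hx _ (B.max'_mem gp.nonempty_body)).2
  rw [gp.gap_eq]
  omega

lemma gap_lt (gp : PackingSeed n a b H B) {y : ℕ} (hy : y ∈ B) :
    gap n B < y ∧ y ≤ n - gap n B := by
  have := B.min'_le y hy
  have := B.le_max' y hy
  have := mem_Icc.mp (gp.body_subset (B.min'_mem gp.nonempty_body))
  have := mem_Icc.mp (gp.body_subset (B.max'_mem gp.nonempty_body))
  rw [gp.gap_eq]
  omega

lemma two_mul_gap_lt (gp : PackingSeed n a b H B) : 2 * gap n B < n := by
  obtain ⟨y, hy⟩ := gp.nonempty_body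
  have := gp.gap_lt hy
  omega

variable {t : ℕ}

lemma seedMap_head (gp : PackingSeed n a b H B) (ht : t ∈ Icc 1 a) :
    seedMap n a b H B t ∈ H := by
  rw [seedMap_of_le (mem_Icc.mp ht).2]
  exact nthSmallest_mem H (gp.card_head ▸ ht)

lemma seedMap_body (gp : PackingSeed n a b H B) (h₁ : a < t) (h₂ : t ≤ a + b) :
    seedMap n a b H B t ∈ B := by
  rw [seedMap_of_lt_of_le h₁ h₂]
  exact nthSmallest_mem B (by rw [gp.card_body, mem_Icc]; omega)

lemma seedMap_tail (gp : PackingSeed n a b H B) (h₁ : a + b < t) (h₂ : t ≤ 2 * a + b) :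
    ∃ x ∈ H, seedMap n a b H B t = x + (n - gap n B) := by
  rw [seedMap_of_lt h₁]
  exact ⟨_, nthSmallest_mem H (by rw [gp.card_head, mem_Icc]; omega), rfl⟩

lemma seedMap_le_gap_iff (gp : PackingSeed n a b H B) (ht : t ∈ Icc 1 (2 * a + b)) :
    seedMap n a b H B t ≤ gap n B ↔ t ≤ a := by
  rw [mem_Icc] at ht
  refine ⟨fun h => ?_, fun h => gp.le_gap (gp.seedMap_head (mem_Icc.mpr ⟨ht.1, h⟩))⟩
  by_contra! h₁
  rcases le_or_gt t (a + b) with h₂ | h₂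
  · have := (gp.gap_lt (gp.seedMap_body h₁ h₂)).1
    omega
  · obtain ⟨x, hx, hx'⟩ := gp.seedMap_tail h₂ ht.2
    have := gp.one_le_of_mem_head hx
    have := gp.two_mul_gap_lt
    omega

lemma sub_gap_lt_seedMap_iff (gp : PackingSeed n a b H B) (ht : t ∈ Icc 1 (2 * a + b)) :
    n - gap n B < seedMap n a b H B t ↔ a + b < t := by
  rw [mem_Icc] at ht
  refine ⟨fun h => ?_, fun h => ?_⟩
  · by_contra! h₂
    rcases le_or_gt t a with h₁ | h₁
    · have := gp.le_gap (gp.seedMap_head (mem_Icc.mpr ⟨ht.1, h₁⟩))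
      have := gp.two_mul_gap_lt
      omega
    · have := (gp.gap_lt (gp.seedMap_body h₁ h₂)).2
      omega
  · obtain ⟨x, hx, hx'⟩ := gp.seedMap_tail h ht.2
    have := gp.one_le_of_mem_head hx
    omega

lemma strictMonoOn_seedMap (gp : PackingSeed n a b H B) :
    StrictMonoOn (seedMap n a b H B) (Icc 1 (2 * a + b)) := by
  have hH := gp.card_head
  have hB := gp.card_body
  intro t ht t' ht' htt'
  rw [mem_coe] at ht ht'
  have hzone := gp.seedMap_le_gap_iff ht
  have hzone' := gp.seedMap_le_gap_iff ht'
  have htail := gp.sub_gap_lt_seedMap_iff ht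
  have htail' := gp.sub_gap_lt_seedMap_iff ht'
  rw [mem_Icc] at ht ht'
  rcases le_or_gt t' a with h₁ | h₁
  · rw [seedMap_of_le h₁, seedMap_of_le (by omega)]
    exact nthSmallest_lt_nthSmallest H (by rw [mem_Icc]; omega) (by rw [mem_Icc]; omega) htt'
  rcases le_or_gt t a with h₂ | h₂
  · omega
  rcases le_or_gt t' (a + b) with h₃ | h₃
  · rw [seedMap_of_lt_of_le h₁ h₃, seedMap_of_lt_of_le h₂ (by omega)]
    exact nthSmallest_lt_nthSmallest B (i := t - a) (j := t' - a) (by rw [mem_Icc]; omega)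
      (by rw [mem_Icc]; omega) (by omega)
  rcases le_or_gt t (a + b) with h₄ | h₄
  · omega
  · rw [seedMap_of_lt h₃, seedMap_of_lt h₄]
    have := nthSmallest_lt_nthSmallest H (i := t - (a + b)) (j := t' - (a + b))
      (by rw [mem_Icc]; omega) (by rw [mem_Icc]; omega) (by omega)
    omega

lemma seedMap_mem_Icc (gp : PackingSeed n a b H B) (ht : t ∈ Icc 1 (2 * a + b)) :
    seedMap n a b H B t ∈ Icc 1 n := by
  rw [mem_Icc] at ht
  rcases le_or_gt t a with h₁ | h₁
  · exact gp.head_subset (gp.seedMap_head (mem_Icc.mpr ⟨ht.1, h₁⟩))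
  rcases le_or_gt t (a + b) with h₂ | h₂
  · exact gp.body_subset (gp.seedMap_body h₁ h₂)
  · obtain ⟨x, hx, hx'⟩ := gp.seedMap_tail h₂ ht.2
    have := gp.one_le_of_mem_head hx
    have := gp.le_gap hx
    have := gp.two_mul_gap_lt
    rw [hx', mem_Icc]
    omega

lemma isCopy_seedCopy (gp : PackingSeed n a b H B) :
    IsCopy n (2 * a + b) (pathEdges (a + b) (2 * a + b)) (seedCopy n a b H B) := by
  refine ⟨_, gp.strictMonoOn_seedMap, fun t ht => gp.seedMap_mem_Icc ht, ?_⟩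
  rw [seedCopy, pathEdges, image_image, show 2 * a + b - (a + b) + 1 = a + 1 by omega]
  rfl

lemma seedEdge_inter_Icc_gap (gp : PackingSeed n a b H B) {i : ℕ} (hi : i ∈ Icc 1 (a + 1)) :
    seedEdge n a b H B i ∩ Icc (gap n B + 1) (n - gap n B) = B := by
  rw [mem_Icc] at hi
  ext y
  simp only [seedEdge, mem_inter, mem_image, mem_Icc]
  constructor
  · rintro ⟨⟨t, ht, rfl⟩, hy⟩
    have ht' : t ∈ Icc 1 (2 * a + b) := mem_Icc.mpr ⟨by omega, by omega⟩
    have := gp.seedMap_le_gap_iff ht'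
    have := gp.sub_gap_lt_seedMap_iff ht'
    exact gp.seedMap_body (by omega) (by omega)
  · intro hy
    obtain ⟨j, hj, rfl⟩ := exists_nthSmallest_eq B hy
    rw [gp.card_body, mem_Icc] at hj
    refine ⟨⟨a + j, by omega, ?_⟩, ?_⟩
    · rw [seedMap_of_lt_of_le (by omega) (by omega), Nat.add_sub_cancel_left]
    · have := gp.gap_lt hy
      omega

lemma seedEdge_recover_head (gp : PackingSeed n a b H B) {i : ℕ} (hi : i ∈ Icc 1 (a + 1)) :
    seedEdge n a b H B i ∩ Icc 1 (gap n B) ∪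
      (seedEdge n a b H B i ∩ Icc (n - gap n B + 1) n).image (· - (n - gap n B)) = H := by
  have hH := gp.card_head
  have hgap := gp.two_mul_gap_lt
  rw [mem_Icc] at hi
  ext x
  simp only [seedEdge, mem_union, mem_inter, mem_image, mem_Icc]
  constructor
  · rintro (⟨⟨t, ht, rfl⟩, hx⟩ | ⟨_, ⟨⟨t, ht, rfl⟩, hy⟩, rfl⟩)
    · have := gp.seedMap_le_gap_iff (t := t) (mem_Icc.mpr ⟨by omega, by omega⟩)
      exact gp.seedMap_head (mem_Icc.mpr ⟨by omega, by omega⟩)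
    · have := gp.sub_gap_lt_seedMap_iff (t := t) (mem_Icc.mpr ⟨by omega, by omega⟩)
      obtain ⟨x, hx, hx'⟩ := gp.seedMap_tail (t := t) (by omega) (by omega)
      rw [hx', Nat.add_sub_cancel]
      exact hx
  · intro hx
    obtain ⟨j, hj, rfl⟩ := exists_nthSmallest_eq H hx
    rw [hH, mem_Icc] at hj
    have h₁ := gp.one_le_of_mem_head hx
    have h₂ := gp.le_gap hx
    rcases le_or_gt i j with hij | hij
    · exact Or.inl ⟨⟨j, by omega, seedMap_of_le hj.2⟩, h₁, h₂⟩
    · have hmap : seedMap n a b H B (j + (a + b)) = nthSmallest H j + (n - gap n B) := by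
        rw [seedMap_of_lt (by omega), Nat.add_sub_cancel]
      exact Or.inr ⟨_, ⟨⟨j + (a + b), by omega, hmap⟩, by omega, by omega⟩, by omega⟩

lemma body_subset_of_gap_le (gp : PackingSeed n a b H B) {H' B' : Finset ℕ}
    (gp' : PackingSeed n a b H' B') {i i' : ℕ}
    (hi : i ∈ Icc 1 (a + 1)) (hi' : i' ∈ Icc 1 (a + 1))
    (h : seedEdge n a b H B i = seedEdge n a b H' B' i') (hgap : gap n B ≤ gap n B') :
    B' ⊆ B := by
  intro y hy
  rw [← gp'.seedEdge_inter_Icc_gap hi', ← h, mem_inter, mem_Icc] at hy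
  rw [← gp.seedEdge_inter_Icc_gap hi, mem_inter, mem_Icc]
  exact ⟨hy.1, by omega, by omega⟩

lemma eq_of_seedEdge_eq (gp : PackingSeed n a b H B) {H' B' : Finset ℕ}
    (gp' : PackingSeed n a b H' B') {i i' : ℕ}
    (hi : i ∈ Icc 1 (a + 1)) (hi' : i' ∈ Icc 1 (a + 1))
    (h : seedEdge n a b H B i = seedEdge n a b H' B' i') : H = H' ∧ B = B' := by
  have hB : B = B' := by
    have hcard : #B = #B' := by rw [gp.card_body, gp'.card_body]
    rcases le_total (gap n B) (gap n B') with hgap | hgap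
    · exact (eq_of_subset_of_card_le (gp.body_subset_of_gap_le gp' hi hi' h hgap) hcard.le).symm
    · exact eq_of_subset_of_card_le (gp'.body_subset_of_gap_le gp hi' hi h.symm hgap) hcard.ge
  subst hB
  refine ⟨?_, rfl⟩
  rw [← gp.seedEdge_recover_head hi, ← gp'.seedEdge_recover_head hi', h]

lemma eq_of_mem_seedCopy (gp : PackingSeed n a b H B) {H' B' : Finset ℕ}
    (gp' : PackingSeed n a b H' B') {e : Finset ℕ}
    (he : e ∈ seedCopy n a b H B) (he' : e ∈ seedCopy n a b H' B') : H = H' ∧ B = B' := by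
  obtain ⟨i, hi, rfl⟩ := mem_image.mp he
  obtain ⟨i', hi', h⟩ := mem_image.mp he'
  exact gp.eq_of_seedEdge_eq gp' hi hi' h.symm

end PackingSeed

lemma seedCopy_nonempty (n a b : ℕ) (H B : Finset ℕ) : (seedCopy n a b H B).Nonempty := by
  simp [seedCopy]

noncomputable def seeds (n a b : ℕ) : Finset (Finset ℕ × Finset ℕ) :=
  ((Icc 1 n).powersetCard a ×ˢ (Icc 1 n).powersetCard b).filter
    fun p => ∀ x ∈ p.1, ∀ y ∈ p.2, x < y ∧ x + y ≤ n

lemma mem_seeds {n a b : ℕ} (hb : 0 < b) {p : Finset ℕ × Finset ℕ} :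
    p ∈ seeds n a b ↔ PackingSeed n a b p.1 p.2 := by
  simp only [seeds, mem_filter, mem_product, mem_powersetCard]
  constructor
  · rintro ⟨⟨⟨hH, hHc⟩, hB, hBc⟩, hcross⟩
    exact ⟨hHc, hBc, card_pos.mp (hBc ▸ hb), hH, hB, hcross⟩
  · rintro ⟨hHc, hBc, -, hH, hB, hcross⟩
    exact ⟨⟨⟨hH, hHc⟩, hB, hBc⟩, hcross⟩

noncomputable def seedPacking (n a b : ℕ) : Finset (Finset (Finset ℕ)) :=
  (seeds n a b).image fun p => seedCopy n a b p.1 p.2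

lemma isPacking_seedPacking {n a b : ℕ} (hb : 0 < b) :
    IsPacking n (2 * a + b) (pathEdges (a + b) (2 * a + b)) (seedPacking n a b) := by
  refine ⟨fun C hC => ?_, fun C hC C' hC' hne => ?_⟩
  · obtain ⟨p, hp, rfl⟩ := mem_image.mp hC
    exact ((mem_seeds hb).mp hp).isCopy_seedCopy
  · obtain ⟨p, hp, rfl⟩ := mem_image.mp hC
    obtain ⟨q, hq, rfl⟩ := mem_image.mp hC'
    refine disjoint_left.mpr fun e he he' => hne ?_
    obtain ⟨h₁, h₂⟩ :=
      ((mem_seeds hb).mp hp).eq_of_mem_seedCopy ((mem_seeds hb).mp hq) he he'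
    rw [h₁, h₂]

lemma card_seedPacking {n a b : ℕ} (hb : 0 < b) : #(seedPacking n a b) = #(seeds n a b) := by
  refine card_image_of_injOn fun p hp q hq h => ?_
  have gp := (mem_seeds hb).mp hp
  obtain ⟨e, he⟩ := seedCopy_nonempty n a b p.1 p.2
  have he' : e ∈ seedCopy n a b q.1 q.2 := (h ▸ he :)
  obtain ⟨h₁, h₂⟩ := gp.eq_of_mem_seedCopy ((mem_seeds hb).mp hq) he he'
  exact Prod.ext h₁ h₂

namespace PackingSeed

variable {n a b : ℕ} {H B : Finset ℕ}

lemma disjoint (gp : PackingSeed n a b H B) : Disjoint H B :=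
  disjoint_left.mpr fun x hx hx' => (gp.lt_and_add_le x hx x hx').1.false

lemma union_mem_powersetCard (gp : PackingSeed n a b H B) :
    H ∪ B ∈ (Icc 1 n).powersetCard (a + b) := by
  rw [mem_powersetCard, card_union_of_disjoint gp.disjoint, gp.card_head, gp.card_body]
  exact ⟨union_subset gp.head_subset gp.body_subset, rfl⟩

lemma union_inter_Icc_min' (gp : PackingSeed n a b H B) :
    (H ∪ B) ∩ Icc 1 (B.min' gp.nonempty_body) = insert (B.min' gp.nonempty_body) H := by
  have hmin := B.min'_mem gp.nonempty_body
  ext y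
  simp only [mem_inter, mem_union, mem_Icc, mem_insert]
  constructor
  · rintro ⟨hy | hy, -, hle⟩
    · exact Or.inr hy
    · exact Or.inl (le_antisymm hle (B.min'_le y hy))
  · rintro (rfl | hy)
    · exact ⟨Or.inr hmin, (mem_Icc.mp (gp.body_subset hmin)).1, le_rfl⟩
    · exact ⟨Or.inl hy, gp.one_le_of_mem_head hy, (gp.lt_and_add_le y hy _ hmin).1.le⟩

lemma card_union_inter_Icc_min' (gp : PackingSeed n a b H B) :
    #((H ∪ B) ∩ Icc 1 (B.min' gp.nonempty_body)) = a + 1 := by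
  have hmin := B.min'_mem gp.nonempty_body
  rw [gp.union_inter_Icc_min',
    card_insert_of_notMem fun h => (gp.lt_and_add_le _ h _ hmin).1.false, gp.card_head]

lemma eq_min'_of_card_inter_Icc (gp : PackingSeed n a b H B) {u : ℕ} (hu : u ∈ H ∪ B)
    (hcard : #((H ∪ B) ∩ Icc 1 u) = a + 1) : u = B.min' gp.nonempty_body := by
  have hmin := B.min'_mem gp.nonempty_body
  refine eq_of_card_inter_Icc_eq hu (mem_union_right _ hmin) ?_
    (mem_Icc.mp (gp.body_subset hmin)).1 (hcard.trans gp.card_union_inter_Icc_min'.symm)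
  exact (mem_Icc.mp (union_subset gp.head_subset gp.body_subset hu)).1

lemma biased_union_iff (gp : PackingSeed n a b H B) {c : ℕ} (hc : n ≤ c) :
    Biased c (a + 1) (H ∪ B) ↔ B.min' gp.nonempty_body + B.max' gp.nonempty_body ≤ c := by
  have hmin := B.min'_mem gp.nonempty_body
  constructor
  · rintro ⟨u, hu, hcard, hle⟩
    rw [← gp.eq_min'_of_card_inter_Icc hu hcard]
    exact hle _ (mem_union_right _ (B.max'_mem gp.nonempty_body))
  · intro h
    refine ⟨_, mem_union_right _ hmin, gp.card_union_inter_Icc_min', fun y hy => ?_⟩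
    rcases mem_union.mp hy with hy | hy
    · have := (gp.lt_and_add_le y hy _ hmin).2
      omega
    · have := B.le_max' y hy
      omega

lemma eq_of_union_eq (gp : PackingSeed n a b H B) {H' B' : Finset ℕ}
    (gp' : PackingSeed n a b H' B') (h : H ∪ B = H' ∪ B') : H = H' ∧ B = B' := by
  have hmin : B.min' gp.nonempty_body = B'.min' gp'.nonempty_body := by
    refine gp'.eq_min'_of_card_inter_Icc
      (h ▸ mem_union_right _ (B.min'_mem gp.nonempty_body)) ?_
    rw [← h, gp.card_union_inter_Icc_min']
  have hH : H = H' := by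
    rw [← erase_insert fun h => (gp.lt_and_add_le _ h _ (B.min'_mem gp.nonempty_body)).1.false,
      ← erase_insert fun h => (gp'.lt_and_add_le _ h _ (B'.min'_mem gp'.nonempty_body)).1.false,
      ← gp.union_inter_Icc_min', ← gp'.union_inter_Icc_min', h, hmin]
  subst hH
  refine ⟨rfl, ?_⟩
  rw [← union_sdiff_cancel_left gp.disjoint, h, union_sdiff_cancel_left gp'.disjoint]

lemma reflect_body (gp : PackingSeed n a b H B) : PackingSeed n a b H (reflect n B) := by
  refine ⟨gp.card_head, (card_reflect gp.body_subset).trans gp.card_body,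
    gp.nonempty_body.image _, gp.head_subset, reflect_subset_Icc gp.body_subset,
    fun x hx y hy => ?_⟩
  obtain ⟨z, hz, rfl⟩ := mem_reflect.mp hy
  have := gp.lt_and_add_le x hx z hz
  have := mem_Icc.mp (gp.body_subset hz)
  omega

lemma biased_union_reflect_iff (gp : PackingSeed n a b H B) :
    Biased n (a + 1) (H ∪ reflect n B) ↔ ¬ Biased (n + 1) (a + 1) (H ∪ B) := by
  have gp' := gp.reflect_body
  rw [gp.biased_union_iff n.le_succ, gp'.biased_union_iff le_rfl,
    min'_reflect gp.nonempty_body, max'_reflect gp.nonempty_body]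
  have := mem_Icc.mp (gp.body_subset (B.min'_mem gp.nonempty_body))
  have := mem_Icc.mp (gp.body_subset (B.max'_mem gp.nonempty_body))
  omega

end PackingSeed

lemma exists_packingSeed_of_biased {n a b : ℕ} {e : Finset ℕ}
    (he : e ∈ (Icc 1 n).powersetCard (a + b)) (h : Biased (n + 1) (a + 1) e) :
    ∃ H B, PackingSeed n a b H B ∧ H ∪ B = e := by
  obtain ⟨u, hu, hcard, hle⟩ := h
  rw [mem_powersetCard] at he
  have hinsert : insert u (e.filter (· < u)) = e ∩ Icc 1 u := by
    ext y
    simp only [mem_insert, mem_filter, mem_inter, mem_Icc]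
    constructor
    · rintro (rfl | ⟨hy, hyu⟩)
      · exact ⟨hu, (mem_Icc.mp (he.1 hu)).1, le_rfl⟩
      · exact ⟨hy, (mem_Icc.mp (he.1 hy)).1, hyu.le⟩
    · rintro ⟨hy, -, hyu⟩
      exact hyu.eq_or_lt.imp id fun h => ⟨hy, h⟩
  have hcardH : #(e.filter (· < u)) = a := by
    have := card_insert_of_notMem (s := e.filter (· < u)) (a := u) (by simp)
    rw [hinsert] at this
    omega
  have hsplit := card_filter_add_card_filter_not (s := e) (· < u)
  refine ⟨e.filter (· < u), e.filter (fun y => ¬ y < u), ⟨hcardH, by omega, ⟨u, ?_⟩,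
    (filter_subset _ _).trans he.1, (filter_subset _ _).trans he.1, fun x hx y hy => ?_⟩,
    filter_union_filter_not_eq _ _⟩
  · simp [hu]
  · simp only [mem_filter] at hx hy
    have := hle y hy.1
    omega

lemma card_seeds_filter_union {n a b : ℕ} (hb : 0 < b) {Q : Finset ℕ → Prop}
    (hQ : ∀ e, Q e → Biased (n + 1) (a + 1) e) :
    #((seeds n a b).filter fun p => Q (p.1 ∪ p.2)) =
      #(((Icc 1 n).powersetCard (a + b)).filter Q) := by
  refine card_bij (fun p _ => p.1 ∪ p.2) (fun p hp => ?_) (fun p hp q hq h => ?_) (fun e he => ?_)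
  · rw [mem_filter] at hp ⊢
    exact ⟨((mem_seeds hb).mp hp.1).union_mem_powersetCard, hp.2⟩
  · obtain ⟨h₁, h₂⟩ := ((mem_seeds hb).mp (mem_filter.mp hp).1).eq_of_union_eq
      ((mem_seeds hb).mp (mem_filter.mp hq).1) h
    exact Prod.ext h₁ h₂
  · rw [mem_filter] at he
    obtain ⟨H, B, gp, rfl⟩ := exists_packingSeed_of_biased he.1 (hQ _ he.2)
    exact ⟨(H, B), mem_filter.mpr ⟨(mem_seeds hb).mpr gp, he.2⟩, rfl⟩

lemma card_seeds_filter_not_biased {n a b : ℕ} (hb : 0 < b) :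
    #((seeds n a b).filter fun p => ¬ Biased (n + 1) (a + 1) (p.1 ∪ p.2)) =
      #((seeds n a b).filter fun p => Biased n (a + 1) (p.1 ∪ p.2)) := by
  have hinv : ∀ p ∈ seeds n a b, (p.1, reflect n (reflect n p.2)) = p := fun p hp =>
    Prod.ext rfl (reflect_reflect ((mem_seeds hb).mp hp).body_subset)
  refine card_nbij' (fun p => (p.1, reflect n p.2)) (fun p => (p.1, reflect n p.2))
    (fun p hp => ?_) (fun p hp => ?_) (fun p hp => hinv p (mem_filter.mp hp).1)
    (fun p hp => hinv p (mem_filter.mp hp).1)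
  all_goals
    rw [mem_coe, mem_filter] at hp ⊢
    have gp := (mem_seeds hb).mp hp.1
    refine ⟨(mem_seeds hb).mpr gp.reflect_body, ?_⟩
  · exact gp.biased_union_reflect_iff.mpr hp.2
  · have := gp.reflect_body.biased_union_reflect_iff
    rw [reflect_reflect gp.body_subset] at this
    exact this.mp hp.2

lemma card_seeds {n a b : ℕ} (hb : 0 < b) :
    #(seeds n a b) = #(((Icc 1 n).powersetCard (a + b)).filter (Biased (n + 1) (a + 1))) +
      #(((Icc 1 n).powersetCard (a + b)).filter (Biased n (a + 1))) := by
  rw [← card_filter_add_card_filter_not (p := fun p => Biased (n + 1) (a + 1) (p.1 ∪ p.2)),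
    card_seeds_filter_not_biased hb, card_seeds_filter_union hb fun _ => id,
    card_seeds_filter_union hb fun _ h => h.mono n.le_succ]

lemma exists_isPacking_card_eq {n r s : ℕ} (hrs : r ≤ s) (hs : s < 2 * r) :
    ∃ P, IsPacking n s (pathEdges r s) P ∧
      #P = #(((Icc 1 n).powersetCard r).filter (Biased (n + 1) (s - r + 1))) +
        #(((Icc 1 n).powersetCard r).filter (Biased n (s - r + 1))) := by
  obtain ⟨a, b, rfl, rfl, hb⟩ : ∃ a b, r = a + b ∧ s = 2 * a + b ∧ 0 < b :=
    ⟨s - r, 2 * r - s, by omega, by omega, by omega⟩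
  rw [show 2 * a + b - (a + b) + 1 = a + 1 by omega, ← card_seeds hb, ← card_seedPacking hb]
  exact ⟨_, isPacking_seedPacking hb, rfl⟩

theorem stmt2_general (n r s m : ℕ) (hev : Even n)
    (hr : 2 ≤ r) (hrs : r ≤ s) (hs : s ≤ 2 * r - 1) (hm : m = s - r + 1) :
    nu n s (pathEdges r s) = 2 * hcount n r m + hcount n (r - 1) m ∧
    nu n s (loosePathEdges r s) = 2 * hcount n r m + hcount n (r - 1) m ∧
    tau n r s (pathEdges r s) = 2 * hcount n r m + hcount n (r - 1) m ∧
    tau n r s (loosePathEdges r s) = 2 * hcount n r m + hcount n (r - 1) m := by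
  have hs' : s < 2 * r := by omega
  have hP := pathEdges_subset_powersetCard hrs
  have hLP := loosePathEdges_subset_pathEdges hrs
  have hLP' : (loosePathEdges r s).Nonempty := insert_nonempty _ _
  have hN : #(((Icc 1 n).powersetCard r).filter (Biased (n + 1) m)) +
      #(((Icc 1 n).powersetCard r).filter (Biased n m)) =
      2 * hcount n r m + hcount n (r - 1) m := by
    rw [card_filter_biased_succ hev (by omega), ← hcount_eq_card_filter_biased (by omega)]
    ring
  obtain ⟨P, hPack, hPcard⟩ := exists_isPacking_card_eq (n := n) hrs hs'
  have lower := card_le_nu hP (pathEdges_nonempty r s) hPack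
  have upper := tau_le_card (isTransversal_transversalSet (n := n) hrs hs')
  rw [hPcard, ← hm, hN] at lower
  rw [card_transversalSet, ← hm, hN] at upper
  have : nu n s (pathEdges r s) ≤ nu n s (loosePathEdges r s) :=
    nu_le_nu_of_subset hLP (hLP.trans hP) hLP'
  have : nu n s (loosePathEdges r s) ≤ tau n r s (loosePathEdges r s) :=
    nu_le_tau (hLP.trans hP) hLP'
  have : nu n s (pathEdges r s) ≤ tau n r s (pathEdges r s) :=
    nu_le_tau hP (pathEdges_nonempty r s)
  have : tau n r s (pathEdges r s) ≤ tau n r s (loosePathEdges r s) :=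
    tau_le_tau_of_subset hLP (hLP.trans hP) hLP'
  omega

/-- For even `n > 0`, `2 ≤ r ≤ s ≤ 2r-1` and `m = s-r+1`, all four of
`ν(n,P)`, `ν(n,LP)`, `τ(n,P)`, `τ(n,LP)` equal `2·h(n,r,m) + h(n,r-1,m)`. -/
theorem stmt2 (n r s m : ℕ) (hn : 0 < n) (hev : Even n)
    (hr : 2 ≤ r) (hrs : r ≤ s) (hs : s ≤ 2 * r - 1) (hm : m = s - r + 1) :
    nu n s (pathEdges r s) = 2 * hcount n r m + hcount n (r - 1) m ∧
    nu n s (loosePathEdges r s) = 2 * hcount n r m + hcount n (r - 1) m ∧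
    tau n r s (pathEdges r s) = 2 * hcount n r m + hcount n (r - 1) m ∧
    tau n r s (loosePathEdges r s) = 2 * hcount n r m + hcount n (r - 1) m :=
  stmt2_general n r s m hev hr hrs hs hm
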